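/- Diamond-norm identity for Pauli noise: for the Pauli noise N(ρ) = (1−p_err)ρ + Σ_i p_i P_i ρ P_i and the global white noise N_wn with the same error rate, the normalized diamond distance equals the 1-norm of the normalized error-probability deviations: ‖N − N_wn‖_⋄ / p_err = Σ_{i=1}^{4^n−1} | p_i/p_err − 1/(4^n−1) |. -/

import Mathlib

open Matrix

noncomputable section

/-- The single-qubit Pauli matrices `I, X, Y, Z`. -/
def σP : Fin 4 → Matrix (Fin 2) (Fin 2) ℂ :=
  ![1, !![0, 1; 1, 0], !![0, -Complex.I; Complex.I, 0], !![1, 0; 0, -1]]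

/-- The `n`-qubit Pauli operator labelled by `a : Fin n → Fin 4`. -/
def PauliOp {n : ℕ} (a : Fin n → Fin 4) : Matrix (Fin n → Fin 2) (Fin n → Fin 2) ℂ :=
  Matrix.of fun x y => ∏ i, σP (a i) (x i) (y i)

/-- The trace norm `‖A‖₁ = sup_{U unitary} |tr(U A)|`. -/
def traceNorm {m : Type*} [Fintype m] [DecidableEq m] (A : Matrix m m ℂ) : ℝ :=
  ⨆ U : Matrix.unitaryGroup m ℂ, ‖((U : Matrix m m ℂ) * A).trace‖

/-- The amplification `Φ ⊗ id` of a superoperator `Φ` to a second copy. -/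
def amp {m p : Type*} (Φ : Matrix m m ℂ → Matrix m m ℂ)
    (X : Matrix (m × p) (m × p) ℂ) : Matrix (m × p) (m × p) ℂ :=
  Matrix.of fun a b => Φ (Matrix.of fun i j => X (i, a.2) (j, b.2)) a.1 b.1

/-- The diamond norm `‖Φ‖_⋄ = sup_{‖X‖₁ ≤ 1} ‖(Φ ⊗ id)(X)‖₁`. -/
def diamondNorm {m : Type*} [Fintype m] [DecidableEq m]
    (Φ : Matrix m m ℂ → Matrix m m ℂ) : ℝ :=
  ⨆ X : {X : Matrix (m × m) (m × m) ℂ // traceNorm X ≤ 1}, traceNorm (amp Φ (X : Matrix (m × m) (m × m) ℂ))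

/-!
Conjugation by `P_a ⊗ 1` is unitary, so the triangle inequality for the trace norm bounds
`‖(Φ ⊗ id)(X)‖₁` by `∑ |c_a| · ‖X‖₁`. Conversely, on the maximally entangled state `Φ ⊗ id`
produces `∑ c_a Π_a`, where `Π_a` projects onto the Bell vector `(P_a ⊗ 1)|Γ⟩`. Since
`tr (P_a P_b) = 2ⁿ δ_ab`, the `Π_a` form a complete family of orthogonal rank-one projections,
so `∑ sign(c_a) Π_a` is unitary and its pairing with `∑ c_a Π_a` has trace `∑ |c_a|`.
-/

open scoped Kronecker

section TraceNorm

variable {m : Type*} [Fintype m] [DecidableEq m]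

lemma traceNorm_bddAbove (A : Matrix m m ℂ) :
    BddAbove (Set.range fun U : unitaryGroup m ℂ => ‖((U : Matrix m m ℂ) * A).trace‖) := by
  refine ⟨∑ i, ∑ j, ‖A j i‖, ?_⟩
  rintro _ ⟨U, rfl⟩
  calc ‖((U : Matrix m m ℂ) * A).trace‖
      ≤ ∑ i, ∑ j, ‖(U : Matrix m m ℂ) i j * A j i‖ := by
        simp only [trace, diag_apply, mul_apply]
        exact (norm_sum_le _ _).trans (Finset.sum_le_sum fun i _ => norm_sum_le _ _)
    _ ≤ ∑ i, ∑ j, ‖A j i‖ := by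
        gcongr with i _ j _
        rw [norm_mul]
        exact mul_le_of_le_one_left (norm_nonneg _) (entry_norm_bound_of_unitary U.2 i j)

lemma norm_trace_mul_le_traceNorm {U : Matrix m m ℂ} (hU : U ∈ unitaryGroup m ℂ)
    (A : Matrix m m ℂ) : ‖(U * A).trace‖ ≤ traceNorm A :=
  le_ciSup (traceNorm_bddAbove A) ⟨U, hU⟩

lemma traceNorm_zero : traceNorm (0 : Matrix m m ℂ) = 0 := by
  simp [traceNorm]

lemma traceNorm_smul (c : ℂ) (A : Matrix m m ℂ) :
    traceNorm (c • A) = ‖c‖ * traceNorm A := by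
  rw [traceNorm, traceNorm, Real.mul_iSup_of_nonneg (norm_nonneg c)]
  exact iSup_congr fun U => by rw [Matrix.mul_smul, trace_smul, norm_smul]

lemma traceNorm_add_le (A B : Matrix m m ℂ) :
    traceNorm (A + B) ≤ traceNorm A + traceNorm B :=
  ciSup_le fun U => by
    rw [mul_add, trace_add]
    exact (norm_add_le _ _).trans
      (add_le_add (norm_trace_mul_le_traceNorm U.2 A) (norm_trace_mul_le_traceNorm U.2 B))

lemma traceNorm_sum_le {ι : Type*} (s : Finset ι) (A : ι → Matrix m m ℂ) :
    traceNorm (∑ a ∈ s, A a) ≤ ∑ a ∈ s, traceNorm (A a) :=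
  Finset.le_sum_of_subadditive _ traceNorm_zero.le traceNorm_add_le s A

lemma traceNorm_unitary_mul_mul_unitary_le {V W : Matrix m m ℂ} (hV : V ∈ unitaryGroup m ℂ)
    (hW : W ∈ unitaryGroup m ℂ) (A : Matrix m m ℂ) : traceNorm (V * A * W) ≤ traceNorm A :=
  ciSup_le fun U => by
    rw [← Matrix.mul_assoc, trace_mul_cycle, ← Matrix.mul_assoc]
    exact norm_trace_mul_le_traceNorm (mul_mem (mul_mem hW U.2) hV) A

lemma traceNorm_vecMulVec_star_le (u : m → ℂ) :
    traceNorm (vecMulVec u (star u)) ≤ ‖star u ⬝ᵥ u‖ :=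
  ciSup_le fun U => by
    set x := WithLp.toLp 2 u
    set y := WithLp.toLp 2 ((U : Matrix m m ℂ) *ᵥ u)
    have hxy : ((U : Matrix m m ℂ) * vecMulVec u (star u)).trace = inner ℂ x y := by
      rw [mul_vecMulVec, trace_vecMulVec, EuclideanSpace.inner_toLp_toLp]
    have hyy : inner ℂ y y = inner ℂ x x := by
      rw [EuclideanSpace.inner_toLp_toLp, EuclideanSpace.inner_toLp_toLp, star_mulVec,
        dotProduct_comm, ← dotProduct_mulVec, mulVec_mulVec, ← star_eq_conjTranspose,
        UnitaryGroup.star_mul_self, one_mulVec, dotProduct_comm]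
    have hnorm : ‖y‖ = ‖x‖ := by
      have h := congrArg (‖·‖) hyy
      simp only [inner_self_eq_norm_sq_to_K, norm_pow, RCLike.norm_ofReal, abs_norm] at h
      exact (pow_left_inj₀ (norm_nonneg _) (norm_nonneg _) two_ne_zero).1 h
    have hxx : ‖star u ⬝ᵥ u‖ = ‖x‖ * ‖x‖ := by
      rw [dotProduct_comm, ← EuclideanSpace.inner_toLp_toLp, inner_self_eq_norm_sq_to_K,
        norm_pow, RCLike.norm_ofReal, abs_norm, sq]
    rw [hxy, hxx]
    exact (norm_inner_le_norm x y).trans_eq (by rw [hnorm])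

end TraceNorm

lemma diamondNorm_eq_of_le_of_le {m : Type*} [Fintype m] [DecidableEq m]
    {Φ : Matrix m m ℂ → Matrix m m ℂ} {r : ℝ}
    (hle : ∀ X : Matrix (m × m) (m × m) ℂ, traceNorm X ≤ 1 → traceNorm (amp Φ X) ≤ r)
    {X₀ : Matrix (m × m) (m × m) ℂ} (hX₀ : traceNorm X₀ ≤ 1) (hge : r ≤ traceNorm (amp Φ X₀)) :
    diamondNorm Φ = r := by
  have : Nonempty {X : Matrix (m × m) (m × m) ℂ // traceNorm X ≤ 1} := ⟨⟨X₀, hX₀⟩⟩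
  have hbdd : BddAbove (Set.range fun X : {X : Matrix (m × m) (m × m) ℂ // traceNorm X ≤ 1} =>
      traceNorm (amp Φ X.1)) := ⟨r, by rintro _ ⟨X, rfl⟩; exact hle X X.2⟩
  exact le_antisymm (ciSup_le fun X => hle X X.2) (hge.trans (le_ciSup hbdd ⟨X₀, hX₀⟩))

section Amp

variable {m p : Type*}

lemma amp_sum_smul {ι : Type*} (s : Finset ι) (c : ι → ℂ) (Φ : ι → Matrix m m ℂ → Matrix m m ℂ)
    (X : Matrix (m × p) (m × p) ℂ) :
    amp (fun ρ => ∑ a ∈ s, c a • Φ a ρ) X = ∑ a ∈ s, c a • amp (Φ a) X := by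
  ext x y
  simp [amp, Matrix.sum_apply]

lemma amp_mul_mul [Fintype m] [Fintype p] [DecidableEq p] (A B : Matrix m m ℂ)
    (X : Matrix (m × p) (m × p) ℂ) :
    amp (fun ρ => A * ρ * B) X = (A ⊗ₖ 1) * X * (B ⊗ₖ 1) := by
  ext x y
  simp [amp, mul_apply, kroneckerMap_apply, one_apply, Fintype.sum_prod_type, Finset.sum_mul]

end Amp

section OrthogonalProjections

variable {ι m : Type*} [Fintype ι] [DecidableEq ι] [Fintype m] [DecidableEq m]
  {E : ι → Matrix m m ℂ}

lemma sum_smul_mul_of_orthogonal (hE : ∀ a b, E a * E b = if a = b then E a else 0)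
    (f : ι → ℂ) (a : ι) : (∑ b, f b • E b) * E a = f a • E a := by
  rw [Finset.sum_mul, Finset.sum_eq_single a]
  · rw [smul_mul_assoc, hE, if_pos rfl]
  · intro b _ hb
    rw [smul_mul_assoc, hE, if_neg hb, smul_zero]
  · simp

lemma sum_abs_le_traceNorm_of_orthogonal (hE : ∀ a b, E a * E b = if a = b then E a else 0)
    (hsum : ∑ a, E a = 1) (hherm : ∀ a, (E a)ᴴ = E a) (htr : ∀ a, (E a).trace = 1)
    (s : Finset ι) (c : ι → ℝ) : ∑ a ∈ s, |c a| ≤ traceNorm (∑ a ∈ s, (c a : ℂ) • E a) := by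
  set ε : ι → ℝ := fun a => if 0 ≤ c a then 1 else -1
  set U : Matrix m m ℂ := ∑ a, (ε a : ℂ) • E a
  have hε : ∀ a, ε a * ε a = 1 := fun a => by simp only [ε]; split_ifs <;> norm_num
  have hεc : ∀ a, ε a * c a = |c a| := fun a => by
    simp only [ε]; split_ifs with h
    · rw [one_mul, abs_of_nonneg h]
    · rw [neg_one_mul, abs_of_neg (not_le.1 h)]
  have hUE : ∀ a, U * E a = (ε a : ℂ) • E a := sum_smul_mul_of_orthogonal hE _
  have hstar : star U = U := by
    simp only [U, star_sum, star_smul, Complex.star_def, Complex.conj_ofReal,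
      star_eq_conjTranspose, hherm]
  have hU : U ∈ unitaryGroup m ℂ := by
    rw [mem_unitaryGroup_iff, hstar]
    calc U * U = U * ∑ a, (ε a : ℂ) • E a := rfl
      _ = 1 := by
        simp only [Finset.mul_sum, mul_smul_comm, hUE, smul_smul, ← Complex.ofReal_mul, hε,
          Complex.ofReal_one, one_smul, hsum]
  have htrace : (U * ∑ a ∈ s, (c a : ℂ) • E a).trace = ((∑ a ∈ s, |c a| : ℝ) : ℂ) := by
    simp only [Finset.mul_sum, mul_smul_comm, hUE, smul_smul, trace_sum, trace_smul, htr,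
      smul_eq_mul, mul_one, ← Complex.ofReal_mul, mul_comm (c _), hεc, Complex.ofReal_sum]
  have := norm_trace_mul_le_traceNorm hU (∑ a ∈ s, (c a : ℂ) • E a)
  rw [htrace, Complex.norm_real, Real.norm_eq_abs] at this
  exact (le_abs_self _).trans this

end OrthogonalProjections

section PiKronecker

variable {ι κ R : Type*} [Fintype ι] [CommSemiring R]

def piKronecker (M : ι → Matrix κ κ R) : Matrix (ι → κ) (ι → κ) R :=
  of fun x y => ∏ i, M i (x i) (y i)

lemma piKronecker_mul [DecidableEq ι] [Fintype κ] (M N : ι → Matrix κ κ R) :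
    piKronecker M * piKronecker N = piKronecker fun i => M i * N i := by
  ext x z
  simp only [piKronecker, mul_apply, of_apply, ← Finset.prod_mul_distrib, Fintype.prod_sum]

lemma piKronecker_one [DecidableEq κ] : piKronecker (fun _ : ι => (1 : Matrix κ κ R)) = 1 := by
  ext x y
  simp [piKronecker, one_apply, Finset.prod_boole, funext_iff]

lemma conjTranspose_piKronecker [StarRing R] (M : ι → Matrix κ κ R) :
    (piKronecker M)ᴴ = piKronecker fun i => (M i)ᴴ := by
  ext x y
  simp [piKronecker, star_prod]

lemma trace_piKronecker [DecidableEq ι] [Fintype κ] (M : ι → Matrix κ κ R) :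
    (piKronecker M).trace = ∏ i, (M i).trace := by
  simp only [trace, diag_apply, piKronecker, of_apply, Fintype.prod_sum]

end PiKronecker

lemma σP_mul_self (k : Fin 4) : σP k * σP k = 1 := by
  fin_cases k <;> ext i j <;> fin_cases i <;> fin_cases j <;>
    simp [σP, mul_apply, Fin.sum_univ_two, one_apply]

lemma conjTranspose_σP (k : Fin 4) : (σP k)ᴴ = σP k := by
  fin_cases k <;> ext i j <;> fin_cases i <;> fin_cases j <;> simp [σP]

lemma trace_σP_mul_σP (k l : Fin 4) : (σP k * σP l).trace = if k = l then 2 else 0 := by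
  fin_cases k <;> fin_cases l <;>
    simp [σP, trace, Fin.sum_univ_two, one_add_one_eq_two]

lemma sum_σP_mul_star (r s r' s' : Fin 2) :
    ∑ k, σP k r s * star (σP k r' s') = if r = r' ∧ s = s' then 2 else 0 := by
  fin_cases r <;> fin_cases s <;> fin_cases r' <;> fin_cases s' <;>
    simp [σP, Fin.sum_univ_four, one_add_one_eq_two]

section Pauli

variable {n : ℕ}

lemma PauliOp_eq_piKronecker (a : Fin n → Fin 4) : PauliOp a = piKronecker fun i => σP (a i) :=
  rfl

lemma PauliOp_mul_self (a : Fin n → Fin 4) : PauliOp a * PauliOp a = 1 := by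
  simp only [PauliOp_eq_piKronecker, piKronecker_mul, σP_mul_self, piKronecker_one]

lemma conjTranspose_PauliOp (a : Fin n → Fin 4) : (PauliOp a)ᴴ = PauliOp a := by
  simp only [PauliOp_eq_piKronecker, conjTranspose_piKronecker, conjTranspose_σP]

lemma PauliOp_mem_unitaryGroup (a : Fin n → Fin 4) : PauliOp a ∈ unitaryGroup _ ℂ := by
  rw [mem_unitaryGroup_iff, star_eq_conjTranspose, conjTranspose_PauliOp, PauliOp_mul_self]

lemma trace_PauliOp_mul (a b : Fin n → Fin 4) :
    (PauliOp a * PauliOp b).trace = if a = b then 2 ^ n else 0 := by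
  simp only [PauliOp_eq_piKronecker, piKronecker_mul, trace_piKronecker, trace_σP_mul_σP,
    Fintype.prod_ite_zero, Finset.prod_const, Finset.card_univ, Fintype.card_fin, funext_iff]

lemma sum_PauliOp_mul_star (x y x' y' : Fin n → Fin 2) :
    ∑ a : Fin n → Fin 4, PauliOp a x y * star (PauliOp a x' y') =
      if x = x' ∧ y = y' then 2 ^ n else 0 := by
  simp only [PauliOp, of_apply, star_prod, ← Finset.prod_mul_distrib]
  rw [← Fintype.prod_sum fun i k => σP k (x i) (y i) * star (σP k (x' i) (y' i))]
  simp only [sum_σP_mul_star, Fintype.prod_ite_zero, Finset.prod_const, Finset.card_univ,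
    Fintype.card_fin, funext_iff, forall_and]

end Pauli

section MaxEntangled

variable (m : Type*) [Fintype m] [DecidableEq m]

def maxEntangled : Matrix (m × m) (m × m) ℂ :=
  (Fintype.card m : ℂ)⁻¹ • vecMulVec (vec (1 : Matrix m m ℂ)) (star (vec 1))

lemma traceNorm_maxEntangled_le : traceNorm (maxEntangled m) ≤ 1 := by
  have hnorm : star (vec (1 : Matrix m m ℂ)) ⬝ᵥ vec 1 = Fintype.card m := by
    rw [star_vec_dotProduct_vec, conjTranspose_one, Matrix.one_mul, trace_one]
  rw [maxEntangled, traceNorm_smul]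
  calc ‖(Fintype.card m : ℂ)⁻¹‖ * traceNorm (vecMulVec (vec (1 : Matrix m m ℂ)) (star (vec 1)))
      ≤ ‖(Fintype.card m : ℂ)⁻¹‖ * ‖(Fintype.card m : ℂ)‖ := by
        gcongr
        exact hnorm ▸ traceNorm_vecMulVec_star_le _
    _ ≤ 1 := by
        rw [← norm_mul]
        rcases eq_or_ne (Fintype.card m : ℂ) 0 with h | h <;> simp [h]

variable {m}

lemma kronecker_one_mul_maxEntangled_mul (A B : Matrix m m ℂ) :
    (A ⊗ₖ 1) * maxEntangled m * (B ⊗ₖ 1) =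
      (Fintype.card m : ℂ)⁻¹ • vecMulVec (vec Aᵀ) (vec B) := by
  rw [maxEntangled, Matrix.mul_smul, Matrix.smul_mul, mul_vecMulVec, vecMulVec_mul,
    kronecker_mulVec_vec, star_vec, Matrix.map_one _ (star_zero _) (star_one _),
    vec_vecMul_kronecker]
  simp

end MaxEntangled

section PauliBell

variable {n : ℕ}

/-- `vec Pᵀ` is the vector `(x, y) ↦ P x y`, i.e. `(P ⊗ 1) |Γ⟩` with `|Γ⟩ = vec 1`. -/
def pauliBellProj (a : Fin n → Fin 4) :
    Matrix ((Fin n → Fin 2) × (Fin n → Fin 2)) ((Fin n → Fin 2) × (Fin n → Fin 2)) ℂ :=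
  ((2 : ℂ) ^ n)⁻¹ • vecMulVec (vec (PauliOp a)ᵀ) (star (vec (PauliOp a)ᵀ))

lemma star_vec_transpose_PauliOp (a : Fin n → Fin 4) :
    star (vec (PauliOp a)ᵀ) = vec (PauliOp a) :=
  congrArg vec (conjTranspose_PauliOp a)

lemma star_vec_transpose_PauliOp_dotProduct (a b : Fin n → Fin 4) :
    star (vec (PauliOp a)ᵀ) ⬝ᵥ vec (PauliOp b)ᵀ = if a = b then 2 ^ n else 0 := by
  rw [star_vec_transpose_PauliOp, vec_dotProduct_vec, ← transpose_mul, trace_transpose,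
    trace_PauliOp_mul]
  exact if_congr eq_comm rfl rfl

lemma pauliBellProj_mul (a b : Fin n → Fin 4) :
    pauliBellProj a * pauliBellProj b = if a = b then pauliBellProj a else 0 := by
  simp only [pauliBellProj, Matrix.smul_mul, Matrix.mul_smul, vecMulVec_mul_vecMulVec,
    star_vec_transpose_PauliOp_dotProduct]
  split_ifs with h
  · subst h
    rw [vecMulVec_smul, smul_smul, smul_smul, mul_assoc,
      inv_mul_cancel₀ (pow_ne_zero _ two_ne_zero), mul_one]
  · simp

lemma sum_pauliBellProj : ∑ a : Fin n → Fin 4, pauliBellProj a = 1 := by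
  ext x y
  simp only [pauliBellProj, Matrix.sum_apply, Matrix.smul_apply, vecMulVec_apply, Pi.star_apply,
    vec, transpose_apply, smul_eq_mul, ← Finset.mul_sum, sum_PauliOp_mul_star, one_apply,
    Prod.ext_iff]
  split_ifs
  exacts [inv_mul_cancel₀ (pow_ne_zero _ two_ne_zero), mul_zero _]

lemma conjTranspose_pauliBellProj (a : Fin n → Fin 4) :
    (pauliBellProj a)ᴴ = pauliBellProj a := by
  simp [pauliBellProj, conjTranspose_smul, conjTranspose_vecMulVec]

lemma trace_pauliBellProj (a : Fin n → Fin 4) : (pauliBellProj a).trace = 1 := by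
  rw [pauliBellProj, trace_smul, trace_vecMulVec, dotProduct_comm,
    star_vec_transpose_PauliOp_dotProduct, if_pos rfl, smul_eq_mul,
    inv_mul_cancel₀ (pow_ne_zero _ two_ne_zero)]

lemma amp_pauliChannel_maxEntangled (s : Finset (Fin n → Fin 4)) (c : (Fin n → Fin 4) → ℝ) :
    amp (fun ρ => ∑ a ∈ s, (c a : ℂ) • (PauliOp a * ρ * PauliOp a)) (maxEntangled _) =
      ∑ a ∈ s, (c a : ℂ) • pauliBellProj a := by
  simp only [amp_sum_smul, amp_mul_mul, kronecker_one_mul_maxEntangled_mul, pauliBellProj,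
    star_vec_transpose_PauliOp, Fintype.card_fun, Fintype.card_fin, Nat.cast_pow, Nat.cast_ofNat]

end PauliBell

section PauliChannel

variable {n : ℕ}

lemma traceNorm_amp_pauliChannel_le (s : Finset (Fin n → Fin 4)) (c : (Fin n → Fin 4) → ℝ)
    (X : Matrix ((Fin n → Fin 2) × (Fin n → Fin 2)) ((Fin n → Fin 2) × (Fin n → Fin 2)) ℂ) :
    traceNorm (amp (fun ρ => ∑ a ∈ s, (c a : ℂ) • (PauliOp a * ρ * PauliOp a)) X) ≤
      (∑ a ∈ s, |c a|) * traceNorm X := by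
  rw [amp_sum_smul, Finset.sum_mul]
  refine (traceNorm_sum_le _ _).trans (Finset.sum_le_sum fun a _ => ?_)
  have hQ : PauliOp a ⊗ₖ (1 : Matrix (Fin n → Fin 2) (Fin n → Fin 2) ℂ) ∈ unitaryGroup _ ℂ :=
    kronecker_mem_unitary (PauliOp_mem_unitaryGroup a) (one_mem _)
  rw [traceNorm_smul, amp_mul_mul, Complex.norm_real, Real.norm_eq_abs]
  exact mul_le_mul_of_nonneg_left (traceNorm_unitary_mul_mul_unitary_le hQ hQ X) (abs_nonneg _)

theorem diamondNorm_pauliChannel (s : Finset (Fin n → Fin 4)) (c : (Fin n → Fin 4) → ℝ) :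
    diamondNorm (fun ρ => ∑ a ∈ s, (c a : ℂ) • (PauliOp a * ρ * PauliOp a)) = ∑ a ∈ s, |c a| := by
  refine diamondNorm_eq_of_le_of_le (fun X hX => ?_) (traceNorm_maxEntangled_le _) ?_
  · refine (traceNorm_amp_pauliChannel_le s c X).trans ?_
    exact mul_le_of_le_one_right (Finset.sum_nonneg fun a _ => abs_nonneg _) hX
  · rw [amp_pauliChannel_maxEntangled]
    exact sum_abs_le_traceNorm_of_orthogonal pauliBellProj_mul sum_pauliBellProj
      conjTranspose_pauliBellProj trace_pauliBellProj s c

end PauliChannel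

theorem stmt19_general (n : ℕ)
    (p : (Fin n → Fin 4) → ℝ)
    (perr : ℝ) (hpos : 0 < perr) :
    diamondNorm (fun ρ : Matrix (Fin n → Fin 2) (Fin n → Fin 2) ℂ =>
        ∑ a ∈ Finset.univ.erase (0 : Fin n → Fin 4),
          (((p a - perr / ((4 : ℝ) ^ n - 1)) : ℝ) : ℂ) • (PauliOp a * ρ * PauliOp a))
        / perr
      = ∑ a ∈ Finset.univ.erase (0 : Fin n → Fin 4),
          |p a / perr - 1 / ((4 : ℝ) ^ n - 1)| := by
  rw [diamondNorm_pauliChannel, Finset.sum_div]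
  refine Finset.sum_congr rfl fun a _ => ?_
  have hdiv : p a / perr - 1 / ((4 : ℝ) ^ n - 1) = (p a - perr / ((4 : ℝ) ^ n - 1)) / perr := by
    rw [sub_div, div_right_comm perr, div_self hpos.ne']
  rw [hdiv, abs_div, abs_of_pos hpos]

/-- diamond-norm identity for Pauli noise: for the Pauli noise
`N(ρ) = (1−p_err)ρ + ∑_i p_i P_i ρ P_i` and the global white noise `N_wn` with the same
error rate, the difference is `ρ ↦ ∑_{a ≠ I} (p_a − p_err/(4^n−1)) P_a ρ P_a`, and its
normalized diamond norm equals the 1-norm of the normalized error-probability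
deviations: `‖N − N_wn‖_⋄ / p_err = ∑_{a ≠ I} |p_a/p_err − 1/(4^n−1)|`. -/
theorem stmt19 (n : ℕ) (hn : 1 ≤ n)
    (p : (Fin n → Fin 4) → ℝ) (hp : ∀ a, 0 ≤ p a) (hpid : p 0 = 0)
    (perr : ℝ) (hperr : perr = ∑ a, p a) (hpos : 0 < perr) (hle : perr ≤ 1) :
    diamondNorm (fun ρ : Matrix (Fin n → Fin 2) (Fin n → Fin 2) ℂ =>
        ∑ a ∈ Finset.univ.erase (0 : Fin n → Fin 4),
          (((p a - perr / ((4 : ℝ) ^ n - 1)) : ℝ) : ℂ) • (PauliOp a * ρ * PauliOp a))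
        / perr
      = ∑ a ∈ Finset.univ.erase (0 : Fin n → Fin 4),
          |p a / perr - 1 / ((4 : ℝ) ^ n - 1)| :=
  stmt19_general n p perr hpos
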